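/- (Regularity of feasible trajectories, part (ii).) Assume (H1), (H2), (H4), (H5), let C be the convex polyhedron C = ⋂_{j=1}^s {x ∈ ℝ^n : ⟨x*_j, x⟩ ≤ c_j} with ‖x*_j‖ = 1, and let (x̄, ū) be a feasible pair for (DMP) such that ū : [0,T] → U has bounded variation and is right continuous on [0,T). Then for every t ∈ [0,T) the right derivative ẋ̄⁺(t) exists and satisfies −ẋ̄⁺(t) ∈ N_C(x̄(t)) + g(t, x̄(t), x̄(t − δ(t)), ū(t)). -/

import Mathlib

open MeasureTheory Set Filter
open scoped RealInnerProductSpace Topology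

set_option maxHeartbeats 1000000

noncomputable section

/-- The normal cone of convex analysis to `C` at `x` (empty when `x ∉ C`). -/
def convNormalCone {n : ℕ} (C : Set (EuclideanSpace ℝ (Fin n)))
    (x : EuclideanSpace ℝ (Fin n)) : Set (EuclideanSpace ℝ (Fin n)) :=
  {v | x ∈ C ∧ ∀ y ∈ C, ⟪v, y - x⟫ ≤ 0}

/-- A feasible pair `(x, u)` (with velocity `x'`) for the time-delayed sweeping
control system (DMP). -/
def FeasiblePair {n d : ℕ} (T Δ : ℝ) (C : Set (EuclideanSpace ℝ (Fin n)))
    (U : Set (EuclideanSpace ℝ (Fin d)))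
    (g : ℝ → EuclideanSpace ℝ (Fin n) → EuclideanSpace ℝ (Fin n) →
      EuclideanSpace ℝ (Fin d) → EuclideanSpace ℝ (Fin n))
    (δ : ℝ → ℝ) (φ : ℝ → EuclideanSpace ℝ (Fin n))
    (x x' : ℝ → EuclideanSpace ℝ (Fin n))
    (u : ℝ → EuclideanSpace ℝ (Fin d)) : Prop :=
  Measurable u ∧ (∀ t ∈ Icc (0 : ℝ) T, u t ∈ U) ∧
  IntervalIntegrable x' volume 0 T ∧
  (∀ t ∈ Icc (0 : ℝ) T, x t = x 0 + ∫ s in (0 : ℝ)..t, x' s) ∧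
  (∀ s ∈ Icc (-Δ) (0 : ℝ), x s = φ s) ∧
  (∀ t ∈ Icc (0 : ℝ) T, x t ∈ C) ∧
  (∀ᵐ t ∂volume, t ∈ Icc (0 : ℝ) T →
    -x' t - g t (x t) (x (t - δ t)) (u t) ∈ convNormalCone C (x t))

lemma stmt7_sqnorm_integral {n : ℕ} {t₀ t : ℝ} {P : ℝ → EuclideanSpace ℝ (Fin n)}
    (hP : IntegrableOn P (Ioc t₀ t)) :
    ‖∫ s in Ioc t₀ t, P s‖ ^ 2
      = 2 * ∫ s in Ioc t₀ t, ⟪P s, ∫ σ in Ioc t₀ s, P σ⟫ := by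
  classical
  set μ := volume.restrict (Ioc t₀ t) with hμdef
  have hPμ : Integrable P μ := hP
  set G : ℝ × ℝ → ℝ := fun z => ⟪P z.1, P z.2⟫ with hGdef
  set F : ℝ × ℝ → ℝ := fun z => if z.2 ≤ z.1 then G z else 0 with hFdef
  set F' : ℝ × ℝ → ℝ := fun z => if z.1 ≤ z.2 then G z else 0 with hF'def
  set D : ℝ × ℝ → ℝ := fun z => if z.1 = z.2 then G z else 0 with hDdef
  have hGmeas : AEStronglyMeasurable G (μ.prod μ) :=
    AEStronglyMeasurable.inner hPμ.aestronglyMeasurable.comp_fst hPμ.aestronglyMeasurable.comp_snd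
  have hbound : Integrable (fun z : ℝ × ℝ => ‖P z.1‖ * ‖P z.2‖) (μ.prod μ) :=
    hPμ.norm.mul_prod hPμ.norm
  have hGle : ∀ z : ℝ × ℝ, ‖G z‖ ≤ ‖P z.1‖ * ‖P z.2‖ := by
    intro z
    simpa [hGdef, Real.norm_eq_abs] using abs_real_inner_le_norm (P z.1) (P z.2)
  have hGint : Integrable G (μ.prod μ) :=
    hbound.mono' hGmeas (Eventually.of_forall hGle)
  have hFmeas : AEStronglyMeasurable F (μ.prod μ) := by
    have : F = Set.indicator {z : ℝ × ℝ | z.2 ≤ z.1} G := by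
      funext z; simp [hFdef, Set.indicator_apply]
    rw [this]
    exact hGmeas.indicator (measurableSet_le measurable_snd measurable_fst)
  have hF'meas : AEStronglyMeasurable F' (μ.prod μ) := by
    have : F' = Set.indicator {z : ℝ × ℝ | z.1 ≤ z.2} G := by
      funext z; simp [hF'def, Set.indicator_apply]
    rw [this]
    exact hGmeas.indicator (measurableSet_le measurable_fst measurable_snd)
  have hDmeas : AEStronglyMeasurable D (μ.prod μ) := by
    have : D = Set.indicator {z : ℝ × ℝ | z.1 = z.2} G := by
      funext z; simp [hDdef, Set.indicator_apply]
    rw [this]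
    exact hGmeas.indicator (measurableSet_eq_fun measurable_fst measurable_snd)
  have habs : ∀ (c : Prop) [Decidable c] (z : ℝ × ℝ),
      ‖if c then G z else 0‖ ≤ ‖P z.1‖ * ‖P z.2‖ := by
    intro c _ z
    by_cases h : c
    · simpa [h] using hGle z
    · simp only [h, if_false, norm_zero]
      positivity
  have hFint : Integrable F (μ.prod μ) :=
    hbound.mono' hFmeas (Eventually.of_forall fun z => habs _ z)
  have hF'int : Integrable F' (μ.prod μ) :=
    hbound.mono' hF'meas (Eventually.of_forall fun z => habs _ z)
  have hDint : Integrable D (μ.prod μ) :=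
    hbound.mono' hDmeas (Eventually.of_forall fun z => habs _ z)
  -- inner integral identity
  have key1 : ∀ s ∈ Ioc t₀ t, (∫ σ in Ioc t₀ s, P σ) = ∫ σ, (Iic s).indicator P σ ∂μ := by
    intro s hs
    rw [hμdef, integral_indicator measurableSet_Iic, Measure.restrict_restrict measurableSet_Iic,
      Iic_inter_Ioc_of_le hs.2]
  have key2 : (∫ s in Ioc t₀ t, ⟪P s, ∫ σ in Ioc t₀ s, P σ⟫)
      = ∫ s, (∫ σ, F (s, σ) ∂μ) ∂μ := by
    refine setIntegral_congr_fun measurableSet_Ioc (fun s hs => ?_)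
    rw [key1 s hs, ← integral_inner (hPμ.indicator measurableSet_Iic) (P s)]
    refine integral_congr_ae (Eventually.of_forall fun σ => ?_)
    by_cases h : σ ≤ s
    · simp [hFdef, hGdef, h, Set.indicator_apply]
    · simp [hFdef, hGdef, h, Set.indicator_apply]
  -- swap
  have hswap : ∫ z, F' z ∂(μ.prod μ) = ∫ z, F z ∂(μ.prod μ) := by
    have h1 : ∫ z, F' z ∂(μ.prod μ) = ∫ s, ∫ σ, F' (s, σ) ∂μ ∂μ :=
      (integral_integral (f := fun s σ => F' (s, σ)) hF'int).symm
    have h2 : ∫ s, ∫ σ, F' (s, σ) ∂μ ∂μ = ∫ σ, ∫ s, F' (s, σ) ∂μ ∂μ :=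
      integral_integral_swap (f := fun s σ => F' (s, σ)) hF'int
    have h3 : ∀ σ s : ℝ, F' (s, σ) = F (σ, s) := by
      intro σ s
      simp only [hFdef, hF'def, hGdef]
      rcases le_or_gt s σ with h | h
      · rw [if_pos h, if_pos h]; exact real_inner_comm _ _
      · rw [if_neg h.not_ge, if_neg h.not_ge]
    have h4 : ∫ σ, ∫ s, F' (s, σ) ∂μ ∂μ = ∫ σ, ∫ s, F (σ, s) ∂μ ∂μ := by
      simp_rw [h3]
    rw [h1, h2, h4]
    exact integral_integral (f := fun σ s => F (σ, s)) hFint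
  -- diagonal vanishes
  have hdiag : (μ.prod μ) {z : ℝ × ℝ | z.1 = z.2} = 0 := by
    rw [Measure.measure_prod_null (measurableSet_eq_fun measurable_fst measurable_snd)]
    refine Eventually.of_forall fun x => ?_
    simp only [Pi.zero_apply]
    have hpre : (Prod.mk x ⁻¹' {z : ℝ × ℝ | z.1 = z.2}) = {x} := by
      ext σ; simp [eq_comm]
    rw [hpre, hμdef, Measure.restrict_apply (measurableSet_singleton _)]
    exact measure_mono_null inter_subset_left (measure_singleton x)
  have hDzero : ∫ z, D z ∂(μ.prod μ) = 0 := by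
    refine integral_eq_zero_of_ae ?_
    rw [Filter.EventuallyEq, ae_iff]
    refine measure_mono_null (fun z hz => ?_) hdiag
    simp only [Pi.zero_apply, mem_setOf_eq] at hz ⊢
    by_contra h
    exact hz (if_neg h)
  -- sum identity
  have hGsq : ∫ z, G z ∂(μ.prod μ) = ‖∫ s, P s ∂μ‖ ^ 2 := by
    rw [← integral_integral (f := fun s σ => G (s, σ)) hGint]
    have h1 : ∀ s : ℝ, ∫ σ, G (s, σ) ∂μ = ⟪P s, ∫ σ, P σ ∂μ⟫ := fun s =>
      integral_inner hPμ (P s)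
    simp_rw [h1]
    have h2 : ∀ s : ℝ, (⟪P s, ∫ σ, P σ ∂μ⟫ : ℝ) = ⟪∫ σ, P σ ∂μ, P s⟫ := fun s =>
      real_inner_comm _ _
    simp_rw [h2]
    rw [integral_inner hPμ (∫ σ, P σ ∂μ)]
    exact real_inner_self_eq_norm_sq _
  have hsum : (∫ z, F z ∂(μ.prod μ)) + (∫ z, F' z ∂(μ.prod μ)) = ‖∫ s, P s ∂μ‖ ^ 2 := by
    rw [← integral_add hFint hF'int]
    have hpt : ∀ z : ℝ × ℝ, F z + F' z = G z + D z := by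
      intro z
      simp only [hFdef, hF'def, hDdef, hGdef]
      rcases lt_trichotomy z.1 z.2 with h | h | h
      · simp [h.le, h.not_ge, h.ne, not_le_of_gt h]
      · simp [h, le_of_eq h, (le_of_eq h.symm)]
      · simp [h.le, h.not_ge, h.ne', not_le_of_gt h]
    simp_rw [hpt]
    rw [integral_add hGint hDint, hDzero, add_zero, hGsq]
  have hFeq : ∫ s, (∫ σ, F (s, σ) ∂μ) ∂μ = ∫ z, F z ∂(μ.prod μ) :=
    integral_integral (f := fun s σ => F (s, σ)) hFint
  calc ‖∫ s, P s ∂μ‖ ^ 2 = (∫ z, F z ∂(μ.prod μ)) + (∫ z, F' z ∂(μ.prod μ)) := hsum.symm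
    _ = 2 * ∫ z, F z ∂(μ.prod μ) := by rw [hswap]; ring
    _ = 2 * ∫ s in Ioc t₀ t, ⟪P s, ∫ σ in Ioc t₀ s, P σ⟫ := by rw [key2, hFeq]

/-- regularity of feasible trajectories, part (ii): the right
derivative of a feasible trajectory exists at every `t ∈ [0,T)` and satisfies
the sweeping inclusion pointwise. -/
theorem stmt7 {n d : ℕ} (s : ℕ) (T Δ : ℝ) (hT : 0 < T)
    (a : Fin s → EuclideanSpace ℝ (Fin n)) (c : Fin s → ℝ)
    (ha : ∀ j, ‖a j‖ = 1)
    (C : Set (EuclideanSpace ℝ (Fin n)))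
    (hC : C = ⋂ j : Fin s, {x : EuclideanSpace ℝ (Fin n) | ⟪a j, x⟫ ≤ c j})
    (U : Set (EuclideanSpace ℝ (Fin d)))
    (g : ℝ → EuclideanSpace ℝ (Fin n) → EuclideanSpace ℝ (Fin n) →
      EuclideanSpace ℝ (Fin d) → EuclideanSpace ℝ (Fin n))
    (δ : ℝ → ℝ) (φ : ℝ → EuclideanSpace ℝ (Fin n))
    -- (H1)
    (hU : U.Nonempty) (hUcomp : IsCompact U)
    -- (H2)
    (hgcont : Continuous fun p : ℝ × EuclideanSpace ℝ (Fin n) ×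
      EuclideanSpace ℝ (Fin n) × EuclideanSpace ℝ (Fin d) =>
      g p.1 p.2.1 p.2.2.1 p.2.2.2)
    (hglip : ∀ B : Set (EuclideanSpace ℝ (Fin n) × EuclideanSpace ℝ (Fin n)),
      Bornology.IsBounded B → ∃ K : ℝ, 0 ≤ K ∧
        ∀ u ∈ U, ∀ t₁ ∈ Icc (0 : ℝ) T, ∀ t₂ ∈ Icc (0 : ℝ) T, ∀ p ∈ B, ∀ q ∈ B,
          ‖g t₁ p.1 p.2 u - g t₂ q.1 q.2 u‖ ≤
            K * (|t₁ - t₂| + ‖p.1 - q.1‖ + ‖p.2 - q.2‖))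
    -- (H4)
    (hδlip : ∃ K : NNReal, LipschitzOnWith K δ (Icc 0 T))
    (hδmono : AntitoneOn δ (Icc 0 T))
    (hδ0 : ∀ t ∈ Icc (0 : ℝ) T, 0 ≤ δ t)
    (hΔpos : 0 < Δ)
    (hΔub : ∀ t ∈ Icc (0 : ℝ) T, δ t ≤ Δ)
    (hΔmax : ∃ t ∈ Icc (0 : ℝ) T, δ t = Δ)
    -- (H5)
    (hφlip : ∃ K : NNReal, LipschitzOnWith K φ (Icc (-Δ) 0))
    (hφ0 : φ 0 ∈ C)
    -- the feasible pair with BV, right-continuous control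
    (xbar xbar' : ℝ → EuclideanSpace ℝ (Fin n))
    (ubar : ℝ → EuclideanSpace ℝ (Fin d))
    (hfeas : FeasiblePair T Δ C U g δ φ xbar xbar' ubar)
    (hBV : BoundedVariationOn ubar (Icc 0 T))
    (hrc : ∀ t ∈ Ico (0 : ℝ) T, Tendsto ubar (𝓝[>] t) (𝓝 (ubar t))) :
    ∀ t ∈ Ico (0 : ℝ) T, ∃ w : EuclideanSpace ℝ (Fin n),
      Tendsto (fun h : ℝ => h⁻¹ • (xbar (t + h) - xbar t))
        (𝓝[>] (0 : ℝ)) (𝓝 w) ∧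
      -w - g t (xbar t) (xbar (t - δ t)) (ubar t) ∈ convNormalCone C (xbar t) := by
  classical
  obtain ⟨humeas, huU, hx'int, hxrep, hxφ, hxC, hincl⟩ := hfeas
  intro t₀ ht₀
  obtain ⟨ht₀0, ht₀T⟩ := ht₀
  set x₀ := xbar t₀ with hx₀def
  have hx₀C : x₀ ∈ C := hxC t₀ ⟨ht₀0, ht₀T.le⟩
  set f : ℝ → EuclideanSpace ℝ (Fin n) :=
    fun σ => g σ (xbar σ) (xbar (σ - δ σ)) (ubar σ) with hfdef
  set f₀ := f t₀ with hf₀def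
  -- the polyhedral tangent cone at x₀
  set K : Set (EuclideanSpace ℝ (Fin n)) :=
    {z | ∀ j : Fin s, ⟪a j, x₀⟫ = c j → ⟪a j, z⟫ ≤ 0} with hKdef
  have hmemC : ∀ y, y ∈ C ↔ ∀ j : Fin s, ⟪a j, y⟫ ≤ c j := by
    intro y; rw [hC]; simp [Set.mem_iInter]
  have hKconv : Convex ℝ K := by
    intro z₁ hz₁ z₂ hz₂ α β hα hβ hαβ
    intro j hj
    have e1 := hz₁ j hj
    have e2 := hz₂ j hj
    rw [inner_add_right, real_inner_smul_right, real_inner_smul_right]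
    nlinarith
  have hKclosed : IsClosed K := by
    have : K = ⋂ j : Fin s, {z : EuclideanSpace ℝ (Fin n) | ⟪a j, x₀⟫ = c j → ⟪a j, z⟫ ≤ 0} := by
      ext z; simp [hKdef, Set.mem_iInter]
    rw [this]
    refine isClosed_iInter fun j => ?_
    by_cases hj : ⟪a j, x₀⟫ = c j
    · have : {z : EuclideanSpace ℝ (Fin n) | ⟪a j, x₀⟫ = c j → ⟪a j, z⟫ ≤ 0}
          = {z : EuclideanSpace ℝ (Fin n) | ⟪a j, z⟫ ≤ 0} := by
        ext z; simp only [mem_setOf_eq]; exact ⟨fun h => h hj, fun h _ => h⟩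
      rw [this]
      exact isClosed_le (Continuous.inner continuous_const continuous_id) continuous_const
    · have : {z : EuclideanSpace ℝ (Fin n) | ⟪a j, x₀⟫ = c j → ⟪a j, z⟫ ≤ 0} = univ := by
        ext z
        simp only [mem_setOf_eq, mem_univ, iff_true]
        exact fun h => absurd h hj
      rw [this]; exact isClosed_univ
  have hK0 : (0 : EuclideanSpace ℝ (Fin n)) ∈ K := by
    intro j _; simp
  obtain ⟨w, hwK, hwmin⟩ :=
    exists_norm_eq_iInf_of_complete_convex ⟨0, hK0⟩ hKclosed.isComplete hKconv (-f₀)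
  have hproj : ∀ z ∈ K, ⟪-f₀ - w, z - w⟫ ≤ 0 :=
    (norm_eq_iInf_iff_real_inner_le_zero hKconv hwK).1 hwmin
  set u₀ := -f₀ - w with hu₀def
  have hu₀w : ⟪u₀, w⟫ = 0 := by
    have h1 := hproj 0 hK0
    have h2 : ((2 : ℝ) • w) ∈ K := by
      intro j hj
      rw [real_inner_smul_right]
      nlinarith [hwK j hj]
    have h3 := hproj _ h2
    rw [zero_sub, inner_neg_right] at h1
    have h4 : (2 : ℝ) • w - w = w := by
      rw [two_smul]; abel
    rw [h4] at h3
    linarith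
  have hu₀K : ∀ z ∈ K, ⟪u₀, z⟫ ≤ 0 := by
    intro z hz
    have := hproj z hz
    rw [inner_sub_right, hu₀w] at this
    linarith
  have hu₀N : ∀ y ∈ C, ⟪u₀, y - x₀⟫ ≤ 0 := by
    intro y hy
    refine hu₀K _ fun j hj => ?_
    rw [inner_sub_right, hj]
    have := (hmemC y).1 hy j
    linarith
  refine ⟨w, ?_, ?_⟩
  swap
  · refine ⟨hx₀C, fun y hy => ?_⟩
    have : -w - g t₀ (xbar t₀) (xbar (t₀ - δ t₀)) (ubar t₀) = u₀ := by
      simp only [hu₀def, hf₀def, hfdef]; abel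
    rw [this]
    exact hu₀N y hy
  -- Now the convergence part
  -- ===== Convergence part =====
  -- continuity of xbar on [0,T]
  have hx'IccInt : IntegrableOn xbar' (Icc 0 T) := by
    rw [integrableOn_Icc_iff_integrableOn_Ioc]
    have h := hx'int
    rw [intervalIntegrable_iff] at h
    simpa [uIoc_of_le hT.le] using h
  have hxcont : ContinuousOn xbar (Icc 0 T) := by
    have h1 : ContinuousOn (fun τ => xbar 0 + ∫ σ in Ioc 0 τ, xbar' σ) (Icc 0 T) :=
      continuousOn_const.add (intervalIntegral.continuousOn_primitive hx'IccInt)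
    refine h1.congr fun τ hτ => ?_
    rw [hxrep τ hτ, intervalIntegral.integral_of_le hτ.1]
  obtain ⟨Kφ, hφl⟩ := hφlip
  have hxcontφ : ContinuousOn xbar (Icc (-Δ) 0) :=
    hφl.continuousOn.congr hxφ
  have hxcontAll : ContinuousOn xbar (Icc (-Δ) T) := by
    have hun : Icc (-Δ) T = Icc (-Δ) 0 ∪ Icc 0 T :=
      (Set.Icc_union_Icc_eq_Icc (by linarith) hT.le).symm
    rw [hun]
    intro p hp
    rcases hp with hp | hp
    · by_cases hp0 : p ∈ Icc (0:ℝ) T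
      · exact (hxcontφ p hp).union (hxcont p hp0)
      · refine (hxcontφ p hp).union ?_
        exact continuousWithinAt_of_notMem_closure (by rwa [closure_Icc])
    · by_cases hp0 : p ∈ Icc (-Δ) (0:ℝ)
      · exact (hxcontφ p hp0).union (hxcont p hp)
      · refine ContinuousWithinAt.union ?_ (hxcont p hp)
        exact continuousWithinAt_of_notMem_closure (by rwa [closure_Icc])
  have hδcont : ContinuousOn δ (Icc 0 T) := hδlip.choose_spec.continuousOn
  have hYmaps : MapsTo (fun σ => σ - δ σ) (Icc 0 T) (Icc (-Δ) T) := by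
    intro σ hσ
    have h1 := hΔub σ hσ
    have h2 := hδ0 σ hσ
    constructor
    · show -Δ ≤ σ - δ σ; linarith [hσ.1]
    · show σ - δ σ ≤ T; linarith [hσ.2]
  have hYcont : ContinuousOn (fun σ => xbar (σ - δ σ)) (Icc 0 T) :=
    hxcontAll.comp (continuousOn_id.sub hδcont) hYmaps
  have ht₀Icc : t₀ ∈ Icc (0:ℝ) T := ⟨ht₀0, ht₀T.le⟩
  have hsubfil : 𝓝[>] t₀ ≤ 𝓝[Icc 0 T] t₀ := by
    rw [← nhdsWithin_Ioc_eq_nhdsGT ht₀T]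
    exact nhdsWithin_mono _ fun p hp => ⟨le_trans ht₀0 hp.1.le, hp.2⟩
  have hxbtend : Tendsto xbar (𝓝[>] t₀) (𝓝 x₀) := (hxcont t₀ ht₀Icc).mono_left hsubfil
  have hftend : Tendsto f (𝓝[>] t₀) (𝓝 f₀) := by
    have h2 : Tendsto (fun σ => xbar (σ - δ σ)) (𝓝[>] t₀) (𝓝 (xbar (t₀ - δ t₀))) :=
      (hYcont t₀ ht₀Icc).mono_left hsubfil
    have h3 := hrc t₀ ⟨ht₀0, ht₀T⟩
    have h4 : Tendsto (fun σ : ℝ => σ) (𝓝[>] t₀) (𝓝 t₀) :=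
      tendsto_id.mono_left nhdsWithin_le_nhds
    exact (hgcont.tendsto (t₀, x₀, xbar (t₀ - δ t₀), ubar t₀)).comp
      (h4.prodMk_nhds (hxbtend.prodMk_nhds (h2.prodMk_nhds h3)))
  set ε : ℝ → ℝ := fun σ => ‖f σ - f₀‖ with hεdef
  have hεtend : Tendsto ε (𝓝[>] t₀) (𝓝 0) := by
    rw [tendsto_iff_norm_sub_tendsto_zero] at hftend
    exact hftend
  -- slack ρ for inactive constraints
  obtain ⟨ρ, hρpos, hρ⟩ : ∃ ρ : ℝ, 0 < ρ ∧
      ∀ j : Fin s, ⟪a j, x₀⟫ < c j → ⟪a j, x₀⟫ + ρ ≤ c j := by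
    by_cases hS : (Finset.univ.filter fun j : Fin s => ⟪a j, x₀⟫ < c j).Nonempty
    · obtain ⟨j₀, hj₀mem, hj₀min⟩ := Finset.exists_min_image _ (fun j => c j - ⟪a j, x₀⟫) hS
      have hj₀ : ⟪a j₀, x₀⟫ < c j₀ := (Finset.mem_filter.1 hj₀mem).2
      refine ⟨c j₀ - ⟪a j₀, x₀⟫, by linarith, fun j hj => ?_⟩
      have := hj₀min j (Finset.mem_filter.2 ⟨Finset.mem_univ _, hj⟩)
      linarith
    · exact ⟨1, one_pos, fun j hj =>
        absurd ⟨j, Finset.mem_filter.2 ⟨Finset.mem_univ _, hj⟩⟩ hS⟩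
  set ε₀ : ℝ := ρ / (2 * (‖w‖ + 1)) with hε₀def
  have hwpos : (0:ℝ) < ‖w‖ + 1 := by positivity
  have hε₀pos : 0 < ε₀ := by rw [hε₀def]; positivity
  have hε₀w : ε₀ * ‖w‖ ≤ ρ / 2 := by
    rw [hε₀def, div_mul_eq_mul_div, div_le_div_iff₀ (by positivity) two_pos]
    nlinarith [norm_nonneg w]
  -- the window [t₀, t₁]
  have hev : ∀ᶠ σ in 𝓝[>] t₀, ‖xbar σ - x₀‖ ≤ ρ/2 ∧ ε σ ≤ 1 := by
    have e1 : ∀ᶠ σ in 𝓝[>] t₀, ‖xbar σ - x₀‖ < ρ/2 :=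
      (tendsto_iff_norm_sub_tendsto_zero.1 hxbtend).eventually_lt_const (by positivity)
    have e2 : ∀ᶠ σ in 𝓝[>] t₀, ε σ < 1 := hεtend.eventually_lt_const one_pos
    filter_upwards [e1, e2] with σ h1 h2
    exact ⟨h1.le, h2.le⟩
  obtain ⟨b, hbmem, hbsub⟩ := mem_nhdsGT_iff_exists_Ioc_subset.1 hev
  set t₁ : ℝ := min b T with ht₁def
  have ht₀t₁ : t₀ < t₁ := lt_min hbmem ht₀T
  have ht₁T : t₁ ≤ T := min_le_right _ _
  have hwin : ∀ σ ∈ Ioc t₀ t₁, ‖xbar σ - x₀‖ ≤ ρ/2 ∧ ε σ ≤ 1 :=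
    fun σ hσ => hbsub ⟨hσ.1, hσ.2.trans (min_le_left _ _)⟩
  have hIccsub : Icc t₀ t₁ ⊆ Icc 0 T := Icc_subset_Icc ht₀0 ht₁T
  have hIocsub : Ioc t₀ t₁ ⊆ Icc 0 T := fun σ hσ => ⟨ht₀0.trans hσ.1.le, hσ.2.trans ht₁T⟩
  -- shifted points stay in C
  have hshift : ∀ σ ∈ Ioc t₀ t₁, xbar σ + ε₀ • w ∈ C := by
    intro σ hσ
    rw [hmemC]
    intro j
    have hxσC : ⟪a j, xbar σ⟫ ≤ c j := (hmemC _).1 (hxC σ (hIocsub hσ)) j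
    rw [inner_add_right, real_inner_smul_right]
    rcases eq_or_lt_of_le ((hmemC x₀).1 hx₀C j) with hact | hinact
    · have haw : ⟪a j, w⟫ ≤ 0 := hwK j hact
      nlinarith
    · have h1 : ⟪a j, xbar σ⟫ ≤ ⟪a j, x₀⟫ + ρ/2 := by
        have h2 : ⟪a j, xbar σ - x₀⟫ ≤ ‖a j‖ * ‖xbar σ - x₀‖ := real_inner_le_norm _ _
        rw [ha j, one_mul, inner_sub_right] at h2
        have := (hwin σ hσ).1
        linarith
      have h4 : ⟪a j, w⟫ ≤ ‖w‖ := by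
        have := real_inner_le_norm (a j) w
        rwa [ha j, one_mul] at this
      have h5 : ε₀ * ⟪a j, w⟫ ≤ ρ/2 :=
        le_trans (mul_le_mul_of_nonneg_left h4 hε₀pos.le) hε₀w
      have := hρ j hinact
      linarith
  -- p and q
  set p : ℝ → EuclideanSpace ℝ (Fin n) := fun σ => xbar' σ - w with hpdef
  set q : ℝ → EuclideanSpace ℝ (Fin n) := fun σ => xbar σ - x₀ - (σ - t₀) • w with hqdef
  have hq0 : q t₀ = 0 := by simp [hqdef, hx₀def]
  have hpint : IntegrableOn p (Ioc t₀ t₁) :=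
    (hx'IccInt.mono_set hIocsub).sub (integrableOn_const measure_Ioc_lt_top.ne)
  have hqrep : ∀ τ ∈ Icc t₀ T, q τ = ∫ σ in Ioc t₀ τ, p σ := by
    intro τ hτ
    have h0τ : IntervalIntegrable xbar' volume 0 τ := hx'int.mono_set
      (by rw [uIcc_of_le (le_trans ht₀0 hτ.1), uIcc_of_le hT.le]
          exact Icc_subset_Icc le_rfl hτ.2)
    have h0t₀ : IntervalIntegrable xbar' volume 0 t₀ := hx'int.mono_set
      (by rw [uIcc_of_le ht₀0, uIcc_of_le hT.le]
          exact Icc_subset_Icc le_rfl ht₀T.le)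
    have hsub2 : xbar τ - xbar t₀ = ∫ σ in t₀..τ, xbar' σ := by
      rw [hxrep τ ⟨le_trans ht₀0 hτ.1, hτ.2⟩, hxrep t₀ ht₀Icc,
        ← intervalIntegral.integral_interval_sub_left h0τ h0t₀]
      abel
    have hIτ : IntegrableOn xbar' (Ioc t₀ τ) :=
      hx'IccInt.mono_set fun σ hσ => ⟨le_trans ht₀0 hσ.1.le, hσ.2.trans hτ.2⟩
    have hconst : (∫ σ in Ioc t₀ τ, w) = (τ - t₀) • w := by
      rw [setIntegral_const, Real.volume_real_Ioc_of_le (by linarith [hτ.1])]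
    calc q τ = (xbar τ - xbar t₀) - (τ - t₀) • w := by rw [hqdef, hx₀def]
      _ = (∫ σ in Ioc t₀ τ, xbar' σ) - ∫ σ in Ioc t₀ τ, w := by
          rw [hsub2, intervalIntegral.integral_of_le hτ.1, hconst]
      _ = ∫ σ in Ioc t₀ τ, p σ :=
          (integral_sub hIτ (integrableOn_const measure_Ioc_lt_top.ne)).symm
  have hqcont : ContinuousOn q (Icc t₀ t₁) := by
    rw [hqdef]
    refine ((hxcont.mono hIccsub).sub continuousOn_const).sub ?_
    exact (continuousOn_id.sub continuousOn_const).smul continuousOn_const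
  -- the pointwise a.e. inequality
  have hae : ∀ᵐ σ ∂(volume.restrict (Ioc t₀ t₁)), ⟪p σ, q σ⟫ ≤ ε σ * ‖q σ‖ := by
    have h1 := ae_restrict_of_ae (s := Ioc t₀ t₁) hincl
    have h2 : ∀ᵐ σ ∂(volume.restrict (Ioc t₀ t₁)), σ ∈ Ioc t₀ t₁ :=
      ae_restrict_mem measurableSet_Ioc
    filter_upwards [h1, h2] with σ hσ1 hσ2
    obtain ⟨-, hvN⟩ := hσ1 (hIocsub hσ2)
    set v := -xbar' σ - g σ (xbar σ) (xbar (σ - δ σ)) (ubar σ) with hvdef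
    have hxeq : p σ = (f₀ - f σ) + u₀ - v := by
      simp only [hpdef, hvdef, hu₀def, hf₀def, hfdef]
      abel
    have e1 : ⟪u₀, xbar σ - x₀⟫ ≤ 0 := hu₀N _ (hxC σ (hIocsub hσ2))
    have e2 : ⟪v, x₀ - xbar σ⟫ ≤ 0 := hvN x₀ hx₀C
    have e3 : ⟪v, w⟫ ≤ 0 := by
      have h5 := hvN _ (hshift σ hσ2)
      rw [add_sub_cancel_left, real_inner_smul_right] at h5
      by_contra hcon
      push_neg at hcon
      nlinarith
    have e4 : ⟪f₀ - f σ, q σ⟫ ≤ ε σ * ‖q σ‖ := by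
      have h6 := real_inner_le_norm (f₀ - f σ) (q σ)
      rw [norm_sub_rev] at h6
      exact h6
    have e5 : ⟪u₀, q σ⟫ ≤ 0 := by
      have hq' : q σ = (xbar σ - x₀) - (σ - t₀) • w := by rw [hqdef]
      rw [hq', inner_sub_right, real_inner_smul_right, hu₀w, mul_zero, sub_zero]
      exact e1
    have e6 : -⟪v, q σ⟫ ≤ 0 := by
      have hnq : -q σ = (x₀ - xbar σ) + (σ - t₀) • w := by
        rw [hqdef]; beta_reduce; abel
      have h7 : -⟪v, q σ⟫ = ⟪v, x₀ - xbar σ⟫ + (σ - t₀) * ⟪v, w⟫ := by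
        rw [← inner_neg_right, hnq, inner_add_right, real_inner_smul_right]
      have h8 : (σ - t₀) * ⟪v, w⟫ ≤ 0 :=
        mul_nonpos_of_nonneg_of_nonpos (by linarith [hσ2.1.le]) e3
      rw [h7]; linarith
    have hsplit : ⟪p σ, q σ⟫ = ⟪f₀ - f σ, q σ⟫ + ⟪u₀, q σ⟫ - ⟪v, q σ⟫ := by
      rw [hxeq, inner_sub_left, inner_add_left]
    rw [hsplit]; linarith
  -- measurability and integrability of ε
  have hxmeas : AEStronglyMeasurable xbar (volume.restrict (Ioc t₀ t₁)) :=
    (hxcont.mono hIocsub).aestronglyMeasurable measurableSet_Ioc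
  have hYmeas : AEStronglyMeasurable (fun σ => xbar (σ - δ σ))
      (volume.restrict (Ioc t₀ t₁)) :=
    ((hYcont.mono hIocsub)).aestronglyMeasurable measurableSet_Ioc
  have hfmeas : AEStronglyMeasurable f (volume.restrict (Ioc t₀ t₁)) := by
    have h1 : AEStronglyMeasurable (fun σ : ℝ => (σ, xbar σ, xbar (σ - δ σ), ubar σ))
        (volume.restrict (Ioc t₀ t₁)) :=
      aestronglyMeasurable_id.prodMk (hxmeas.prodMk
        (hYmeas.prodMk humeas.aestronglyMeasurable))
    exact hgcont.comp_aestronglyMeasurable h1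
  have hεmeas : AEStronglyMeasurable ε (volume.restrict (Ioc t₀ t₁)) :=
    (hfmeas.sub aestronglyMeasurable_const).norm
  have hεnn : ∀ σ, 0 ≤ ε σ := fun σ => norm_nonneg _
  have hεint : IntegrableOn ε (Ioc t₀ t₁) := by
    refine Integrable.mono' (integrable_const 1) hεmeas ?_
    filter_upwards [ae_restrict_mem measurableSet_Ioc] with σ hσ
    rw [Real.norm_eq_abs, abs_of_nonneg (hεnn σ)]
    exact (hwin σ hσ).2
  -- bound for q on the window
  obtain ⟨σB, hσBmem, hσBmax⟩ := isCompact_Icc.exists_isMaxOn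
    ⟨t₀, le_refl t₀, ht₀t₁.le⟩ hqcont.norm
  have hqB : ∀ τ ∈ Icc t₀ t₁, ‖q τ‖ ≤ ‖q σB‖ := fun τ hτ => hσBmax hτ
  have hinner_int : IntegrableOn (fun σ => ⟪p σ, q σ⟫) (Ioc t₀ t₁) := by
    refine Integrable.mono' (hpint.norm.mul_const ‖q σB‖)
      (AEStronglyMeasurable.inner hpint.aestronglyMeasurable
        ((hqcont.mono Ioc_subset_Icc_self).aestronglyMeasurable measurableSet_Ioc)) ?_
    filter_upwards [ae_restrict_mem measurableSet_Ioc] with σ hσ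
    rw [Real.norm_eq_abs]
    exact le_trans (abs_real_inner_le_norm _ _)
      (mul_le_mul_of_nonneg_left (hqB σ (Ioc_subset_Icc_self hσ)) (norm_nonneg _))
  set Em : ℝ → ℝ := fun τ => ∫ σ in Ioc t₀ τ, ε σ with hEmdef
  have hEmnn : ∀ τ, 0 ≤ Em τ := fun τ =>
    setIntegral_nonneg measurableSet_Ioc fun σ _ => hεnn σ
  have hEmmono : ∀ τ τ' : ℝ, τ ≤ τ' → τ' ≤ t₁ → Em τ ≤ Em τ' := by
    intro τ τ' h1 h2
    refine setIntegral_mono_set (hεint.mono_set (Ioc_subset_Ioc_right h2))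
      (Eventually.of_forall fun σ => hεnn σ)
      ((Ioc_subset_Ioc_right h1).eventuallyLE)
  -- the energy identity
  have hqeq : ∀ τ ∈ Ioc t₀ t₁, ‖q τ‖^2 = 2 * ∫ σ in Ioc t₀ τ, ⟪p σ, q σ⟫ := by
    intro τ hτ
    have h1 : IntegrableOn p (Ioc t₀ τ) := hpint.mono_set (Ioc_subset_Ioc_right hτ.2)
    have h2 := stmt7_sqnorm_integral h1
    rw [hqrep τ ⟨hτ.1.le, hτ.2.trans ht₁T⟩, h2]
    congr 1
    refine setIntegral_congr_fun measurableSet_Ioc fun σ hσ => ?_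
    rw [hqrep σ ⟨hσ.1.le, (hσ.2.trans hτ.2).trans ht₁T⟩]
  -- the main estimate
  have hmain : ∀ τ ∈ Ioc t₀ t₁, ‖q τ‖ ≤ 2 * Em τ := by
    intro τ hτ
    obtain ⟨sM, hsMmem, hsMmax⟩ := isCompact_Icc.exists_isMaxOn
      ⟨t₀, le_refl t₀, hτ.1.le⟩ ((hqcont.mono (Icc_subset_Icc_right hτ.2)).norm)
    have hMnn : (0:ℝ) ≤ ‖q sM‖ := norm_nonneg _
    have hMb : ∀ σ ∈ Icc t₀ τ, ‖q σ‖ ≤ ‖q sM‖ := fun σ hσ => hsMmax hσ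
    have hr : ∀ τ' ∈ Ioc t₀ τ, ‖q τ'‖^2 ≤ 2 * (‖q sM‖ * Em τ) := by
      intro τ' hτ'
      have hτ'1 : τ' ∈ Ioc t₀ t₁ := ⟨hτ'.1, hτ'.2.trans hτ.2⟩
      rw [hqeq τ' hτ'1]
      have hle : (∫ σ in Ioc t₀ τ', ⟪p σ, q σ⟫) ≤ ∫ σ in Ioc t₀ τ', ε σ * ‖q sM‖ := by
        refine integral_mono_ae (hinner_int.mono_set (Ioc_subset_Ioc_right hτ'1.2))
          ((hεint.mono_set (Ioc_subset_Ioc_right hτ'1.2)).mul_const ‖q sM‖) ?_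
        have h1 := ae_restrict_of_ae_restrict_of_subset
          (Ioc_subset_Ioc_right hτ'1.2 : Ioc t₀ τ' ⊆ Ioc t₀ t₁) hae
        filter_upwards [h1, ae_restrict_mem measurableSet_Ioc] with σ hσ1 hσ2
        refine hσ1.trans (mul_le_mul_of_nonneg_left ?_ (hεnn σ))
        exact hMb σ ⟨hσ2.1.le, hσ2.2.trans hτ'.2⟩
      have heq2 : (∫ σ in Ioc t₀ τ', ε σ * ‖q sM‖) = Em τ' * ‖q sM‖ := by
        rw [hEmdef, integral_mul_const]
      have hEm' : Em τ' ≤ Em τ := hEmmono τ' τ hτ'.2 hτ.2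
      nlinarith
    have hM2 : ‖q sM‖^2 ≤ 2 * (‖q sM‖ * Em τ) := by
      rcases eq_or_lt_of_le hsMmem.1 with heq | hlt
      · have hM0 : ‖q sM‖ = 0 := by rw [← heq, hq0, norm_zero]
        rw [hM0]
        have := hEmnn τ
        nlinarith
      · exact hr sM ⟨hlt, hsMmem.2⟩
    have hMle : ‖q sM‖ ≤ 2 * Em τ := by nlinarith [hEmnn τ]
    exact le_trans (hMb τ ⟨hτ.1.le, le_refl τ⟩) hMle
  -- final convergence
  rw [tendsto_iff_norm_sub_tendsto_zero]
  refine Metric.tendsto_nhds.2 fun θ hθ => ?_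
  have hev2 : ∀ᶠ σ in 𝓝[>] t₀, ε σ < θ/4 := hεtend.eventually_lt_const (by positivity)
  obtain ⟨b', hb'mem, hb'sub⟩ := mem_nhdsGT_iff_exists_Ioc_subset.1 hev2
  set t₂ : ℝ := min b' t₁ with ht₂def
  have ht₀t₂ : t₀ < t₂ := lt_min hb'mem ht₀t₁
  have hIoc2 : Ioc (0:ℝ) (t₂ - t₀) ∈ 𝓝[>] (0:ℝ) := Ioc_mem_nhdsGT (by linarith)
  filter_upwards [hIoc2] with h hh
  have hτ2 : t₀ + h ∈ Ioc t₀ t₂ := ⟨by linarith [hh.1], by linarith [hh.2]⟩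
  have hτ1 : t₀ + h ∈ Ioc t₀ t₁ := ⟨hτ2.1, hτ2.2.trans (min_le_right _ _)⟩
  have hEb : Em (t₀ + h) ≤ θ/4 * h := by
    have hle3 : (∫ σ in Ioc t₀ (t₀+h), ε σ) ≤ ∫ _σ in Ioc t₀ (t₀+h), (θ/4 : ℝ) := by
      refine setIntegral_mono_on (hεint.mono_set (Ioc_subset_Ioc_right hτ1.2))
        (integrableOn_const measure_Ioc_lt_top.ne) measurableSet_Ioc fun σ hσ => ?_
      exact (hb'sub ⟨hσ.1, hσ.2.trans (hτ2.2.trans (min_le_left _ _))⟩).le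
    rw [setIntegral_const, Real.volume_real_Ioc_of_le (by linarith [hh.1])] at hle3
    have : (t₀ + h - t₀) • (θ/4 : ℝ) = θ/4 * h := by
      rw [smul_eq_mul]; ring
    rw [this] at hle3
    exact hle3
  have hqbd := hmain (t₀ + h) hτ1
  have hne : h ≠ 0 := ne_of_gt hh.1
  have hkey : (fun h : ℝ => h⁻¹ • (xbar (t₀ + h) - xbar t₀)) h - w = h⁻¹ • q (t₀ + h) := by
    have hq' : q (t₀ + h) = xbar (t₀ + h) - x₀ - ((t₀ + h) - t₀) • w := by rw [hqdef]
    rw [hq', add_sub_cancel_left, smul_sub, smul_smul, inv_mul_cancel₀ hne, one_smul, hx₀def]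
  rw [Real.dist_eq, sub_zero, abs_of_nonneg (norm_nonneg _), hkey, norm_smul,
    Real.norm_eq_abs, abs_of_pos (inv_pos.2 hh.1)]
  have hstep : h⁻¹ * ‖q (t₀ + h)‖ ≤ h⁻¹ * (2 * (θ/4 * h)) := by
    refine mul_le_mul_of_nonneg_left (hqbd.trans ?_) (inv_pos.2 hh.1).le
    nlinarith [hEb]
  have hfin : h⁻¹ * (2 * (θ/4 * h)) = θ/2 := by
    field_simp
    ring
  rw [hfin] at hstep
  exact lt_of_le_of_lt hstep (by linarith)
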